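/- arXiv:2506.19876 — 2 statements merged into one kernel-verified Lean document; each statement's English description precedes it below -/
import Mathlib

section
/- Let R be a commutative von Neumann regular ring with 1 ≠ 0 and characteristic 3. Then every proper ideal of R is a cdf-absorbing ideal of R. -/
/-- A proper ideal `I` of a commutative ring `R` is a cubes-difference factor absorbing
ideal (cdf-absorbing ideal) if whenever `a^3 - b^3 ∈ I`, then `a - b ∈ I` or
`a^2 + a*b + b^2 ∈ I`. -/
def IsCdfAbsorbing {R : Type*} [CommRing R] (I : Ideal R) : Prop :=
  I ≠ ⊤ ∧ ∀ a b : R, a ^ 3 - b ^ 3 ∈ I → a - b ∈ I ∨ a ^ 2 + a * b + b ^ 2 ∈ I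

theorem sub_pow_three_of_three_eq_zero {R : Type*} [CommRing R] (h3 : (3 : R) = 0) (a b : R) :
    (a - b) ^ 3 = a ^ 3 - b ^ 3 := by
  linear_combination (b - a) * a * b * h3

theorem Ideal.isRadical_of_forall_eq_mul_mul {R : Type*} [CommRing R]
    (hvnr : ∀ a : R, ∃ x : R, a = a * x * a) (I : Ideal R) : I.IsRadical := by
  refine (I.isRadical_iff_pow_one_lt 2 one_lt_two).2 fun a ha => ?_
  obtain ⟨x, hx⟩ := hvnr a
  have : a = a ^ 2 * x := by linear_combination hx
  exact this ▸ I.mul_mem_right x ha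

theorem stmt_4_general {R : Type*} [CommRing R]
    (hvnr : ∀ a : R, ∃ x : R, a = a * x * a) (hchar : (3 : R) = 0)
    (I : Ideal R) (hI : I ≠ ⊤) : IsCdfAbsorbing I := by
  refine ⟨hI, fun a b h => Or.inl ?_⟩
  rw [← sub_pow_three_of_three_eq_zero hchar] at h
  exact I.isRadical_of_forall_eq_mul_mul hvnr ⟨3, h⟩

theorem stmt_4 {R : Type*} [CommRing R] [Nontrivial R]
    (hvnr : ∀ a : R, ∃ x : R, a = a * x * a) (hchar : (3 : R) = 0)
    (I : Ideal R) (hI : I ≠ ⊤) : IsCdfAbsorbing I :=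
  stmt_4_general hvnr hchar I hI
end

section
/- Let R ⊆ T be an extension of commutative rings (i.e., R is a subring of T, each with 1 ≠ 0) and J a cdf-absorbing ideal of T. Then J ∩ R is a cdf-absorbing ideal of R. -/
theorem IsCdfAbsorbing.comap {R S : Type*} [CommRing R] [CommRing S] (f : R →+* S)
    {J : Ideal S} (hJ : IsCdfAbsorbing J) : IsCdfAbsorbing (J.comap f) := by
  refine ⟨Ideal.comap_ne_top f hJ.1, fun a b hab => ?_⟩
  simpa only [Ideal.mem_comap, map_sub, map_add, map_mul, map_pow] using
    hJ.2 (f a) (f b) (by simpa only [Ideal.mem_comap, map_sub, map_pow] using hab)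

theorem stmt_11_general {T : Type*} [CommRing T] (R : Subring T)
    (J : Ideal T) (hJ : IsCdfAbsorbing J) :
    IsCdfAbsorbing (J.comap R.subtype) :=
  hJ.comap R.subtype

theorem stmt_11 {T : Type*} [CommRing T] [Nontrivial T] (R : Subring T) [Nontrivial R]
    (J : Ideal T) (hJ : IsCdfAbsorbing J) :
    IsCdfAbsorbing (J.comap R.subtype) :=
  stmt_11_general R J hJ
end
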